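/- Let G be a group with finite generating set S and Cayley graph Γ, and let g₁, g₂, h₁, h₂ ∈ G. If C̄(g₁) is strongly equivalent to C̄(g₂) and C̄(h₁) is strongly equivalent to C̄(h₂), then m(C̄(g₁)) = m(C̄(g₂)) and n(C̄(g₁), C̄(h₁)) = n(C̄(g₂), C̄(h₂)). -/

import Mathlib

/-!
A strong equivalence `T : C̄(g₁) ≅ C̄(g₂)` restricts to a root-preserving isomorphism of the
cones `C(g₁) ≅ C(g₂)`, so it preserves the path metric `δ` of the cones. This metric
determines all the structure of `C̄(h)` for `h ∈ C(g)`: a vertex `k ∈ C(g)` lies in `C(h)` iff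
`δ(g, h) + δ(h, k) = δ(g, k)`, and an edge between vertices of `C(g)` is tangent iff neither
endpoint lies in the cone of the other. Hence `T` restricts to a strong equivalence
`C̄(h) ≅ C̄(T h)` for every `h ∈ C(g₁)`, and it maps the norm increasing edges at `g₁` onto those
at `g₂`, which gives the equality of the `n`-values. For `m`: the Cayley graph is vertex
transitive, and the neighbours of `g` that are not norm decreasing are exactly its neighbours in
`C̄(g)`, which `T` preserves.
-/

variable {G : Type*} [Group G]

noncomputable def wordLength (S : Set G) (g : G) : ℕ :=
  sInf {n | ∃ w : List G, (∀ x ∈ w, x ∈ S ∪ S⁻¹) ∧ w.length = n ∧ w.prod = g}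

def cayley (S : Set G) : SimpleGraph G where
  Adj g h := g ≠ h ∧ h * g⁻¹ ∈ S ∪ S⁻¹
  symm := by
    constructor
    rintro g h ⟨hne, hmem⟩
    refine ⟨hne.symm, ?_⟩
    have key : g * h⁻¹ = (h * g⁻¹)⁻¹ := by group
    rw [key]
    rcases hmem with h1 | h1
    · exact Or.inr (by simpa [Set.mem_inv] using h1)
    · exact Or.inl (by simpa [Set.mem_inv] using h1)
  loopless := ⟨fun g h => h.1 rfl⟩

def coneSet (S : Set G) (g : G) : Set G :=
  {h | wordLength S h = wordLength S g + (cayley S).dist g h}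

lemma self_mem_coneSet (S : Set G) (g : G) : g ∈ coneSet S g := by
  simp [coneSet]

/-- The cone `C(g)` as a subgraph of the Cayley graph. -/
def coneSubgraph (S : Set G) (g : G) : (cayley S).Subgraph where
  verts := coneSet S g
  Adj a b := a ∈ coneSet S g ∧ b ∈ coneSet S g ∧ (cayley S).Adj a b
  adj_sub h := h.2.2
  edge_vert h := h.1
  symm := by constructor; rintro a b ⟨ha, hb, hab⟩; exact ⟨hb, ha, hab.symm⟩

/-- The extended cone `C̄(g)` as a subgraph of the Cayley graph: the cone together with,
for each vertex `h` of the cone and each tangent edge `{h,k}` of the Cayley graph,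
the vertex `k` and the edge `{h,k}`. -/
def extConeSubgraph (S : Set G) (g : G) : (cayley S).Subgraph where
  verts := coneSet S g ∪
    {k | ∃ h ∈ coneSet S g, (cayley S).Adj h k ∧ wordLength S h = wordLength S k}
  Adj a b := (cayley S).Adj a b ∧
    ((a ∈ coneSet S g ∧ b ∈ coneSet S g) ∨
      (wordLength S a = wordLength S b ∧ (a ∈ coneSet S g ∨ b ∈ coneSet S g)))
  adj_sub h := h.1
  edge_vert := by
    rintro a b ⟨hadj, hc | ⟨ht, hc⟩⟩
    · exact Or.inl hc.1
    · rcases hc with hc | hc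
      · exact Or.inl hc
      · exact Or.inr ⟨b, hc, hadj.symm, ht.symm⟩
  symm := by
    constructor
    rintro a b ⟨hadj, hc | ⟨ht, hc⟩⟩
    · exact ⟨hadj.symm, Or.inl ⟨hc.2, hc.1⟩⟩
    · exact ⟨hadj.symm, Or.inr ⟨ht.symm, hc.symm⟩⟩

lemma self_mem_extCone (S : Set G) (g : G) : g ∈ (extConeSubgraph S g).verts :=
  Set.mem_union_left _ (self_mem_coneSet S g)

/-- Strong equivalence of extended cones: a graph isomorphism of the extended cones sending
root to root and cone onto cone. -/
noncomputable def StrongEquiv (S : Set G) (g h : G) : Prop :=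
  ∃ T : (extConeSubgraph S g).coe ≃g (extConeSubgraph S h).coe,
    ((T ⟨g, self_mem_extCone S g⟩ : (extConeSubgraph S h).verts) : G) = h ∧
    ∀ x : (extConeSubgraph S g).verts,
      ((x : G) ∈ coneSet S g ↔ ((T x : (extConeSubgraph S h).verts) : G) ∈ coneSet S h)

/-- Weak equivalence of cones: a root-preserving graph isomorphism of the cones. -/
noncomputable def WeakEquiv (S : Set G) (g h : G) : Prop :=
  ∃ T : (cayley S).induce (coneSet S g) ≃g (cayley S).induce (coneSet S h),
    ((T ⟨g, self_mem_coneSet S g⟩ : coneSet S h) : G) = h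

/-- `m(C̄(g))`: the number of norm decreasing edges at `g`. -/
noncomputable def mval (S : Set G) (g : G) : ℕ :=
  Set.ncard {h | (cayley S).Adj g h ∧ wordLength S g = wordLength S h + 1}

/-- `n(C̄(g),C̄(h))`: the number of norm increasing edges `(g,h')` at `g` with
`C̄(h')` strongly equivalent to `C̄(h)`. -/
noncomputable def nval (S : Set G) (g h : G) : ℕ :=
  Set.ncard {h' | (cayley S).Adj g h' ∧ wordLength S h' = wordLength S g + 1 ∧
    StrongEquiv S h' h}


namespace SimpleGraph

variable {V W : Type*} {Γ : SimpleGraph V} {Γ' : SimpleGraph W}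

theorem Walk.dist_add_dist_le_length {u v x : V} (p : Γ.Walk u v) (hx : x ∈ p.support) :
    Γ.dist u x + Γ.dist x v ≤ p.length := by
  classical
  conv_rhs => rw [← p.take_spec hx, Walk.length_append]
  exact add_le_add (dist_le _) (dist_le _)

theorem Reachable.dist_map_le {u v : V} (f : Γ →g Γ') (h : Γ.Reachable u v) :
    Γ'.dist (f u) (f v) ≤ Γ.dist u v := by
  obtain ⟨p, hp⟩ := h.exists_walk_length_eq_dist
  rw [← hp, ← p.length_map f]
  exact dist_le _

theorem Iso.dist_eq (f : Γ ≃g Γ') (u v : V) : Γ'.dist (f u) (f v) = Γ.dist u v := by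
  by_cases h : Γ.Reachable u v
  · refine le_antisymm (h.dist_map_le f.toHom) ?_
    simpa using (f.reachable_iff.2 h).dist_map_le f.symm.toHom
  · rw [dist_eq_zero_of_not_reachable h, dist_eq_zero_of_not_reachable (f.reachable_iff.not.2 h)]

end SimpleGraph

def Equiv.restrictSubset {α β : Type*} {s A : Set α} {t B : Set β} (e : s ≃ t) (hA : A ⊆ s)
    (hB : B ⊆ t) (h : ∀ x : s, (x : α) ∈ A ↔ (e x : β) ∈ B) : A ≃ B :=
  (Equiv.subtypeSubtypeEquivSubtype (hA ·)).symm.trans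
    ((e.subtypeEquiv h).trans (Equiv.subtypeSubtypeEquivSubtype (hB ·)))

theorem Set.ncard_eq_of_equiv_of_subset {α β : Type*} {s A : Set α} {t B : Set β} (e : s ≃ t)
    (hA : A ⊆ s) (hB : B ⊆ t) (h : ∀ x : s, (x : α) ∈ A ↔ (e x : β) ∈ B) :
    A.ncard = B.ncard :=
  Set.ncard_congr' (e.restrictSubset hA hB h)

def SimpleGraph.Iso.restrictSubgraph {V W : Type*} {Γ : SimpleGraph V} {Γ' : SimpleGraph W}
    {H K : Γ.Subgraph} {H' K' : Γ'.Subgraph} (T : H.coe ≃g H'.coe) (hK : K ≤ H) (hK' : K' ≤ H')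
    (hverts : ∀ x : H.verts, (x : V) ∈ K.verts ↔ (T x : W) ∈ K'.verts)
    (hadj : ∀ x y : H.verts, K.Adj x y ↔ K'.Adj (T x) (T y)) : K.coe ≃g K'.coe where
  toEquiv := T.toEquiv.restrictSubset hK.1 hK'.1 hverts
  map_rel_iff' := (hadj _ _).symm

section CayleyGraph

variable {S : Set G}

theorem exists_list_prod_eq (hgen : Subgroup.closure S = ⊤) (g : G) :
    ∃ w : List G, (∀ x ∈ w, x ∈ S ∪ S⁻¹) ∧ w.prod = g := by
  apply Submonoid.exists_list_of_mem_closure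
  rw [← Subgroup.closure_toSubmonoid, Subgroup.mem_toSubmonoid, hgen]
  exact Subgroup.mem_top g

theorem exists_list_length_eq_wordLength (hgen : Subgroup.closure S = ⊤) (g : G) :
    ∃ w : List G, (∀ x ∈ w, x ∈ S ∪ S⁻¹) ∧ w.length = wordLength S g ∧ w.prod = g := by
  obtain ⟨w, hw, hprod⟩ := exists_list_prod_eq hgen g
  exact Nat.sInf_mem (s := {n | ∃ w : List G, (∀ x ∈ w, x ∈ S ∪ S⁻¹) ∧ w.length = n ∧ w.prod = g})
    ⟨w.length, w, hw, rfl, hprod⟩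

theorem wordLength_le_of_adj (hgen : Subgroup.closure S = ⊤) {a b : G} (h : (cayley S).Adj a b) :
    wordLength S b ≤ wordLength S a + 1 := by
  obtain ⟨w, hw, hlen, hprod⟩ := exists_list_length_eq_wordLength hgen a
  exact hlen ▸ Nat.sInf_le ⟨b * a⁻¹ :: w, List.forall_mem_cons.2 ⟨h.2, hw⟩, rfl, by simp [hprod]⟩

theorem wordLength_le_add_length (hgen : Subgroup.closure S = ⊤) {a b : G}
    (p : (cayley S).Walk a b) : wordLength S b ≤ wordLength S a + p.length := by
  induction p with
  | nil => simp
  | cons h _ ih =>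
    have := wordLength_le_of_adj hgen h
    rw [SimpleGraph.Walk.length_cons]
    omega

theorem cayley_reachable_mul {x : G} (hx : x ∈ S ∪ S⁻¹) (g : G) :
    (cayley S).Reachable g (x * g) := by
  by_cases hxg : x * g = g
  · rw [hxg]
  · exact SimpleGraph.Adj.reachable ⟨Ne.symm hxg, by simpa using hx⟩

theorem cayley_connected (hgen : Subgroup.closure S = ⊤) : (cayley S).Connected := by
  refine (SimpleGraph.connected_iff_exists_forall_reachable _).2 ⟨1, fun g => ?_⟩
  have hg : g ∈ Subgroup.closure S := hgen ▸ Subgroup.mem_top g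
  induction hg using Subgroup.closure_induction_left with
  | one => rfl
  | mul_left x hx y _ ih => exact ih.trans (cayley_reachable_mul (Or.inl hx) y)
  | inv_mul_cancel x hx y _ ih =>
    exact ih.trans (cayley_reachable_mul (Or.inr (Set.inv_mem_inv.2 hx)) y)

theorem wordLength_le_add_dist (hgen : Subgroup.closure S = ⊤) (a b : G) :
    wordLength S b ≤ wordLength S a + (cayley S).dist a b := by
  obtain ⟨p, hp⟩ := (cayley_connected hgen).exists_walk_length_eq_dist a b
  exact hp ▸ wordLength_le_add_length hgen p

def cayleyMulRight (S : Set G) (y : G) : cayley S ≃g cayley S where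
  toEquiv := Equiv.mulRight y
  map_rel_iff' := by simp [cayley, mul_inv_rev, ← mul_assoc]

theorem ncard_neighborSet_cayley (g₁ g₂ : G) :
    ((cayley S).neighborSet g₁).ncard = ((cayley S).neighborSet g₂).ncard := by
  have h : cayleyMulRight S (g₁⁻¹ * g₂) g₁ = g₂ := mul_inv_cancel_left g₁ g₂
  rw [← h, ← SimpleGraph.Iso.image_neighborSet,
    Set.ncard_image_of_injective _ (cayleyMulRight S _).injective]

theorem finite_neighborSet_cayley (hS : S.Finite) (g : G) : ((cayley S).neighborSet g).Finite :=
  ((hS.union hS.inv).image (· * g)).subset fun h hh => ⟨h * g⁻¹, hh.2, inv_mul_cancel_right h g⟩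

end CayleyGraph

section Cone

variable {S : Set G}

theorem mem_coneSet {g k : G} :
    k ∈ coneSet S g ↔ wordLength S k = wordLength S g + (cayley S).dist g k :=
  Iff.rfl

theorem mem_coneSet_of_adj {g k : G} (h : (cayley S).Adj g k) :
    k ∈ coneSet S g ↔ wordLength S k = wordLength S g + 1 := by
  rw [mem_coneSet, SimpleGraph.dist_eq_one_iff_adj.2 h]

theorem wordLength_eq_iff_not_mem_coneSet (hgen : Subgroup.closure S = ⊤) {a b : G}
    (h : (cayley S).Adj a b) :
    wordLength S a = wordLength S b ↔ a ∉ coneSet S b ∧ b ∉ coneSet S a := by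
  rw [mem_coneSet_of_adj h, mem_coneSet_of_adj h.symm]
  have := wordLength_le_of_adj hgen h
  have := wordLength_le_of_adj hgen h.symm
  omega

theorem coneSet_subset (hgen : Subgroup.closure S = ⊤) {g h : G} (hh : h ∈ coneSet S g) :
    coneSet S h ⊆ coneSet S g := fun k hk => by
  rw [mem_coneSet] at hh hk ⊢
  have := (cayley_connected hgen).dist_triangle (u := g) (v := h) (w := k)
  have := wordLength_le_add_dist hgen g k
  omega

theorem mem_coneSet_of_mem_support (hgen : Subgroup.closure S = ⊤) {g k x : G}
    (hk : k ∈ coneSet S g) {p : (cayley S).Walk g k} (hp : p.length = (cayley S).dist g k)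
    (hx : x ∈ p.support) : x ∈ coneSet S g := by
  have := p.dist_add_dist_le_length hx
  have := wordLength_le_add_dist hgen g x
  have := wordLength_le_add_dist hgen x k
  rw [mem_coneSet] at hk ⊢
  omega

abbrev coneGraph (S : Set G) (g : G) : SimpleGraph (coneSet S g) :=
  (cayley S).induce (coneSet S g)

theorem exists_coneGraph_walk_length_eq_dist (hgen : Subgroup.closure S = ⊤) {g h k : G}
    (hh : h ∈ coneSet S g) (hk : k ∈ coneSet S h) :
    ∃ p : (coneGraph S g).Walk ⟨h, hh⟩ ⟨k, coneSet_subset hgen hh hk⟩,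
      p.length = (cayley S).dist h k := by
  obtain ⟨q, hq⟩ := (cayley_connected hgen).exists_walk_length_eq_dist h k
  have hsupp x (hx : x ∈ q.support) : x ∈ coneSet S g :=
    coneSet_subset hgen hh (mem_coneSet_of_mem_support hgen hk hq hx)
  have hlen := congrArg SimpleGraph.Walk.length (q.map_induce hsupp)
  rw [SimpleGraph.Walk.length_map] at hlen
  exact ⟨q.induce _ hsupp, hlen.trans hq⟩

theorem coneGraph_connected (hgen : Subgroup.closure S = ⊤) (g : G) :
    (coneGraph S g).Connected := by
  refine (SimpleGraph.connected_iff_exists_forall_reachable _).2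
    ⟨⟨g, self_mem_coneSet S g⟩, fun ⟨k, hk⟩ => ?_⟩
  obtain ⟨p, -⟩ := exists_coneGraph_walk_length_eq_dist hgen (self_mem_coneSet S g) hk
  exact ⟨p⟩

theorem dist_le_coneGraph_dist (hgen : Subgroup.closure S = ⊤) {g : G} (a b : coneSet S g) :
    (cayley S).dist a b ≤ (coneGraph S g).dist a b :=
  (coneGraph_connected hgen g a b).dist_map_le (SimpleGraph.Embedding.induce _).toHom

theorem coneGraph_dist_eq (hgen : Subgroup.closure S = ⊤) {g h k : G} (hh : h ∈ coneSet S g)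
    (hk : k ∈ coneSet S h) :
    (coneGraph S g).dist ⟨h, hh⟩ ⟨k, coneSet_subset hgen hh hk⟩ = (cayley S).dist h k := by
  obtain ⟨p, hp⟩ := exists_coneGraph_walk_length_eq_dist hgen hh hk
  exact le_antisymm (hp ▸ SimpleGraph.dist_le p) (dist_le_coneGraph_dist hgen ⟨h, hh⟩ ⟨k, _⟩)

theorem mem_coneSet_iff_coneGraph_dist (hgen : Subgroup.closure S = ⊤) {g : G}
    (h k : coneSet S g) :
    (k : G) ∈ coneSet S h ↔ (coneGraph S g).dist ⟨g, self_mem_coneSet S g⟩ h +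
      (coneGraph S g).dist h k = (coneGraph S g).dist ⟨g, self_mem_coneSet S g⟩ k := by
  obtain ⟨h, hh⟩ := h
  obtain ⟨k, hk⟩ := k
  dsimp only
  rw [coneGraph_dist_eq hgen (self_mem_coneSet S g) hh,
    coneGraph_dist_eq hgen (self_mem_coneSet S g) hk]
  have := mem_coneSet.1 hh
  have := mem_coneSet.1 hk
  constructor
  · intro hkh
    rw [coneGraph_dist_eq hgen hh hkh]
    have := mem_coneSet.1 hkh
    omega
  · intro hsum
    have : (cayley S).dist h k ≤ _ := dist_le_coneGraph_dist hgen ⟨h, hh⟩ ⟨k, hk⟩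
    have := wordLength_le_add_dist hgen h k
    rw [mem_coneSet]
    omega

end Cone

section ExtendedCone

variable {S : Set G}

theorem coneSet_subset_verts {g : G} : coneSet S g ⊆ (extConeSubgraph S g).verts :=
  Set.subset_union_left

theorem extConeSubgraph_adj_iff_cayley_adj {g a b : G} (ha : a ∈ coneSet S g)
    (hb : b ∈ coneSet S g) : (extConeSubgraph S g).Adj a b ↔ (cayley S).Adj a b :=
  ⟨And.left, fun h => ⟨h, Or.inl ⟨ha, hb⟩⟩⟩

theorem extConeSubgraph_adj_self_iff (hgen : Subgroup.closure S = ⊤) {g h : G} :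
    (extConeSubgraph S g).Adj g h ↔
      (cayley S).Adj g h ∧ wordLength S g ≤ wordLength S h := by
  refine ⟨fun ⟨hadj, hc⟩ => ⟨hadj, ?_⟩, fun ⟨hadj, hle⟩ => ⟨hadj, ?_⟩⟩
  · rcases hc with ⟨-, hh⟩ | ⟨hw, -⟩
    · rw [mem_coneSet] at hh
      omega
    · omega
  · have := wordLength_le_of_adj hgen hadj
    by_cases hw : wordLength S h = wordLength S g + 1
    · exact Or.inl ⟨self_mem_coneSet S g, (mem_coneSet_of_adj hadj).2 hw⟩
    · exact Or.inr ⟨by omega, Or.inl (self_mem_coneSet S g)⟩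

theorem wordLength_eq_of_extConeSubgraph_adj {g a b : G} (h : (extConeSubgraph S g).Adj a b)
    (hab : ¬(a ∈ coneSet S g ∧ b ∈ coneSet S g)) : wordLength S a = wordLength S b :=
  (h.2.resolve_left hab).1

theorem mem_extConeSubgraph_verts_iff {g x : G} :
    x ∈ (extConeSubgraph S g).verts ↔ x ∈ coneSet S g ∨ ∃ c, (extConeSubgraph S g).Adj c x := by
  refine ⟨Or.imp_right fun ⟨c, hc, hadj, hw⟩ => ⟨c, hadj, Or.inr ⟨hw, Or.inl hc⟩⟩, ?_⟩
  rintro (hx | ⟨c, hc⟩)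
  exacts [Or.inl hx, hc.snd_mem]

theorem extConeSubgraph_le (hgen : Subgroup.closure S = ⊤) {g h : G} (hh : h ∈ coneSet S g) :
    extConeSubgraph S h ≤ extConeSubgraph S g := by
  have hsub := coneSet_subset hgen hh
  refine ⟨?_, ?_⟩
  · rintro x (hx | ⟨c, hc, hadj, hw⟩)
    exacts [Or.inl (hsub hx), Or.inr ⟨c, hsub hc, hadj, hw⟩]
  · rintro a b ⟨hab, ⟨ha, hb⟩ | ⟨hw, hc⟩⟩
    exacts [⟨hab, Or.inl ⟨hsub ha, hsub hb⟩⟩, ⟨hab, Or.inr ⟨hw, hc.imp (hsub ·) (hsub ·)⟩⟩]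

theorem extConeSubgraph_adj_iff_of_mem (hgen : Subgroup.closure S = ⊤) {g h a b : G}
    (hh : h ∈ coneSet S g) :
    (extConeSubgraph S h).Adj a b ↔ (extConeSubgraph S g).Adj a b ∧
      (a ∈ coneSet S h ∧ b ∈ coneSet S h ∨
        wordLength S a = wordLength S b ∧ (a ∈ coneSet S h ∨ b ∈ coneSet S h)) :=
  ⟨fun hab => ⟨(extConeSubgraph_le hgen hh).2 hab, hab.2⟩, fun ⟨hab, hc⟩ => ⟨hab.1, hc⟩⟩

end ExtendedCone

/-- `StrongEquiv S g₁ g₂` unfolds to `∃ T, IsStrongIso T`. -/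
def IsStrongIso {S : Set G} {g₁ g₂ : G}
    (T : (extConeSubgraph S g₁).coe ≃g (extConeSubgraph S g₂).coe) : Prop :=
  (T ⟨g₁, self_mem_extCone S g₁⟩ : G) = g₂ ∧
    ∀ x : (extConeSubgraph S g₁).verts, (x : G) ∈ coneSet S g₁ ↔ (T x : G) ∈ coneSet S g₂

namespace IsStrongIso

variable {S : Set G} {g₁ g₂ g₃ : G} {T : (extConeSubgraph S g₁).coe ≃g (extConeSubgraph S g₂).coe}

theorem map_root (hT : IsStrongIso T) :
    T ⟨g₁, self_mem_extCone S g₁⟩ = ⟨g₂, self_mem_extCone S g₂⟩ :=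
  Subtype.ext hT.1

theorem symm (hT : IsStrongIso T) : IsStrongIso T.symm :=
  ⟨by rw [← hT.map_root, RelIso.symm_apply_apply], fun y => by simpa using (hT.2 (T.symm y)).symm⟩

theorem trans {T' : (extConeSubgraph S g₂).coe ≃g (extConeSubgraph S g₃).coe}
    (hT : IsStrongIso T) (hT' : IsStrongIso T') : IsStrongIso (T.trans T') :=
  ⟨by simp [hT.map_root, hT'.1], fun x => (hT.2 x).trans (hT'.2 (T x))⟩

def coneIso (hT : IsStrongIso T) : coneGraph S g₁ ≃g coneGraph S g₂ where
  toFun a := ⟨T ⟨a, coneSet_subset_verts a.2⟩, (hT.2 _).1 a.2⟩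
  invFun b := ⟨T.symm ⟨b, coneSet_subset_verts b.2⟩, (hT.symm.2 _).1 b.2⟩
  left_inv a := Subtype.ext <| by
    change (T.symm (T ⟨a, coneSet_subset_verts a.2⟩) : G) = a
    rw [RelIso.symm_apply_apply]
  right_inv b := Subtype.ext <| by
    change (T (T.symm ⟨b, coneSet_subset_verts b.2⟩) : G) = b
    rw [RelIso.apply_symm_apply]
  map_rel_iff' {a b} := by
    change (cayley S).Adj (T ⟨a, coneSet_subset_verts a.2⟩) (T ⟨b, coneSet_subset_verts b.2⟩) ↔
      (cayley S).Adj a b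
    rw [← extConeSubgraph_adj_iff_cayley_adj ((hT.2 _).1 a.2) ((hT.2 _).1 b.2),
      ← extConeSubgraph_adj_iff_cayley_adj a.2 b.2]
    exact T.map_adj_iff

theorem coneIso_root (hT : IsStrongIso T) :
    hT.coneIso ⟨g₁, self_mem_coneSet S g₁⟩ = ⟨g₂, self_mem_coneSet S g₂⟩ :=
  Subtype.ext hT.1

theorem mem_coneSet_iff (hgen : Subgroup.closure S = ⊤) (hT : IsStrongIso T)
    {y : (extConeSubgraph S g₁).verts} (hy : (y : G) ∈ coneSet S g₁)
    (x : (extConeSubgraph S g₁).verts) : (x : G) ∈ coneSet S y ↔ (T x : G) ∈ coneSet S (T y) := by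
  by_cases hx : (x : G) ∈ coneSet S g₁
  · have h := mem_coneSet_iff_coneGraph_dist hgen (hT.coneIso ⟨y, hy⟩) (hT.coneIso ⟨x, hx⟩)
    rw [← hT.coneIso_root, SimpleGraph.Iso.dist_eq, SimpleGraph.Iso.dist_eq,
      SimpleGraph.Iso.dist_eq, ← mem_coneSet_iff_coneGraph_dist hgen] at h
    exact h.symm
  · exact iff_of_false (fun h => hx (coneSet_subset hgen hy h))
      (fun h => hx ((hT.2 x).2 (coneSet_subset hgen ((hT.2 y).1 hy) h)))

theorem wordLength_eq_iff (hgen : Subgroup.closure S = ⊤) (hT : IsStrongIso T)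
    {x y : (extConeSubgraph S g₁).verts} (hxy : (extConeSubgraph S g₁).Adj x y) :
    wordLength S x = wordLength S y ↔ wordLength S (T x) = wordLength S (T y) := by
  have hxy' : (extConeSubgraph S g₂).Adj (T x) (T y) := T.map_adj_iff.2 hxy
  by_cases hc : (x : G) ∈ coneSet S g₁ ∧ (y : G) ∈ coneSet S g₁
  · rw [wordLength_eq_iff_not_mem_coneSet hgen hxy.adj_sub,
      wordLength_eq_iff_not_mem_coneSet hgen hxy'.adj_sub,
      hT.mem_coneSet_iff hgen hc.2, hT.mem_coneSet_iff hgen hc.1]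
  · have hc' : ¬((T x : G) ∈ coneSet S g₂ ∧ (T y : G) ∈ coneSet S g₂) := by
      rwa [← hT.2 x, ← hT.2 y]
    exact iff_of_true (wordLength_eq_of_extConeSubgraph_adj hxy hc)
      (wordLength_eq_of_extConeSubgraph_adj hxy' hc')

theorem extConeSubgraph_adj_iff (hgen : Subgroup.closure S = ⊤) (hT : IsStrongIso T)
    {y : (extConeSubgraph S g₁).verts} (hy : (y : G) ∈ coneSet S g₁)
    (a b : (extConeSubgraph S g₁).verts) :
    (extConeSubgraph S y).Adj a b ↔ (extConeSubgraph S (T y)).Adj (T a) (T b) := by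
  rw [extConeSubgraph_adj_iff_of_mem hgen hy,
    extConeSubgraph_adj_iff_of_mem hgen ((hT.2 y).1 hy)]
  have hadj : (extConeSubgraph S g₂).Adj (T a) (T b) ↔ (extConeSubgraph S g₁).Adj a b :=
    T.map_adj_iff
  rw [hadj]
  refine and_congr_right fun hab => ?_
  rw [hT.mem_coneSet_iff hgen hy, hT.mem_coneSet_iff hgen hy, hT.wordLength_eq_iff hgen hab]

theorem mem_extConeSubgraph_verts_iff (hgen : Subgroup.closure S = ⊤) (hT : IsStrongIso T)
    {y : (extConeSubgraph S g₁).verts} (hy : (y : G) ∈ coneSet S g₁)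
    (a : (extConeSubgraph S g₁).verts) :
    (a : G) ∈ (extConeSubgraph S y).verts ↔ (T a : G) ∈ (extConeSubgraph S (T y)).verts := by
  have hTy : (T y : G) ∈ coneSet S g₂ := (hT.2 y).1 hy
  rw [_root_.mem_extConeSubgraph_verts_iff, _root_.mem_extConeSubgraph_verts_iff,
    hT.mem_coneSet_iff hgen hy]
  refine or_congr_right ⟨fun ⟨c, hc⟩ => ?_, fun ⟨d, hd⟩ => ?_⟩
  · have hcv := ((extConeSubgraph_le hgen hy).2 hc).fst_mem
    exact ⟨T ⟨c, hcv⟩, (hT.extConeSubgraph_adj_iff hgen hy ⟨c, hcv⟩ a).1 hc⟩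
  · have hdv := ((extConeSubgraph_le hgen hTy).2 hd).fst_mem
    refine ⟨T.symm ⟨d, hdv⟩, (hT.extConeSubgraph_adj_iff hgen hy _ a).2 ?_⟩
    rwa [RelIso.apply_symm_apply]

theorem strongEquiv (hgen : Subgroup.closure S = ⊤) (hT : IsStrongIso T)
    {y : (extConeSubgraph S g₁).verts} (hy : (y : G) ∈ coneSet S g₁) :
    StrongEquiv S y (T y) :=
  ⟨T.restrictSubgraph (extConeSubgraph_le hgen hy) (extConeSubgraph_le hgen ((hT.2 y).1 hy))
    (hT.mem_extConeSubgraph_verts_iff hgen hy) (hT.extConeSubgraph_adj_iff hgen hy),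
    rfl, fun x => hT.mem_coneSet_iff hgen hy ⟨x, (extConeSubgraph_le hgen hy).1 x.2⟩⟩

end IsStrongIso

theorem StrongEquiv.symm {S : Set G} {g₁ g₂ : G} (h : StrongEquiv S g₁ g₂) :
    StrongEquiv S g₂ g₁ :=
  let ⟨T, hT⟩ := h
  ⟨T.symm, IsStrongIso.symm hT⟩

theorem StrongEquiv.trans {S : Set G} {g₁ g₂ g₃ : G} (h : StrongEquiv S g₁ g₂)
    (h' : StrongEquiv S g₂ g₃) : StrongEquiv S g₁ g₃ :=
  let ⟨T, hT⟩ := h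
  let ⟨T', hT'⟩ := h'
  ⟨T.trans T', IsStrongIso.trans hT hT'⟩

section Counting

variable {S : Set G} {g₁ g₂ : G} {T : (extConeSubgraph S g₁).coe ≃g (extConeSubgraph S g₂).coe}

theorem mval_add_ncard_neighborSet (hS : S.Finite) (hgen : Subgroup.closure S = ⊤) (g : G) :
    mval S g + ((extConeSubgraph S g).neighborSet g).ncard =
      ((cayley S).neighborSet g).ncard := by
  rw [← Set.ncard_sdiff_add_ncard_of_subset ((extConeSubgraph S g).neighborSet_subset g)
    (finite_neighborSet_cayley hS g), mval]
  congr 2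
  ext h
  simp only [Set.mem_ofPred_eq, Set.mem_sdiff, SimpleGraph.mem_neighborSet,
    SimpleGraph.Subgraph.mem_neighborSet, extConeSubgraph_adj_self_iff hgen, not_and, not_le]
  refine ⟨fun ⟨hadj, hw⟩ => ⟨hadj, fun _ => by omega⟩, fun ⟨hadj, hlt⟩ => ⟨hadj, ?_⟩⟩
  have := wordLength_le_of_adj hgen hadj.symm
  have := hlt hadj
  omega

theorem IsStrongIso.ncard_neighborSet_eq (hT : IsStrongIso T) :
    ((extConeSubgraph S g₁).neighborSet g₁).ncard =
      ((extConeSubgraph S g₂).neighborSet g₂).ncard :=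
  Set.ncard_eq_of_equiv_of_subset T.toEquiv (SimpleGraph.Subgraph.neighborSet_subset_verts _ _)
    (SimpleGraph.Subgraph.neighborSet_subset_verts _ _) fun x => by
      have h : (extConeSubgraph S g₂).Adj (T ⟨g₁, self_mem_extCone S g₁⟩) (T x) ↔
          (extConeSubgraph S g₁).Adj g₁ x := T.map_adj_iff
      rw [hT.1] at h
      exact h.symm

theorem IsStrongIso.mval_eq (hS : S.Finite) (hgen : Subgroup.closure S = ⊤)
    (hT : IsStrongIso T) : mval S g₁ = mval S g₂ := by
  have h₁ := mval_add_ncard_neighborSet hS hgen g₁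
  have h₂ := mval_add_ncard_neighborSet hS hgen g₂
  have := ncard_neighborSet_cayley (S := S) g₁ g₂
  have := hT.ncard_neighborSet_eq
  omega

theorem IsStrongIso.map_increasing_neighbor (hgen : Subgroup.closure S = ⊤) (hT : IsStrongIso T)
    {h₁ h₂ : G} (hh : StrongEquiv S h₁ h₂) {x : (extConeSubgraph S g₁).verts}
    (hx : (cayley S).Adj g₁ x ∧ wordLength S x = wordLength S g₁ + 1 ∧ StrongEquiv S x h₁) :
    (cayley S).Adj g₂ (T x) ∧ wordLength S (T x) = wordLength S g₂ + 1 ∧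
      StrongEquiv S (T x) h₂ := by
  obtain ⟨hadj, hlen, hxh⟩ := hx
  have hxc : (x : G) ∈ coneSet S g₁ := (mem_coneSet_of_adj hadj).2 hlen
  have hTadj : (cayley S).Adj g₂ (T x) := by
    have h : (extConeSubgraph S g₂).Adj (T ⟨g₁, self_mem_extCone S g₁⟩) (T x) :=
      T.map_adj_iff.2 ⟨hadj, Or.inl ⟨self_mem_coneSet S g₁, hxc⟩⟩
    rw [hT.1] at h
    exact h.adj_sub
  exact ⟨hTadj, (mem_coneSet_of_adj hTadj).1 ((hT.2 x).1 hxc),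
    ((hT.strongEquiv hgen hxc).symm.trans hxh).trans hh⟩

theorem IsStrongIso.nval_eq (hgen : Subgroup.closure S = ⊤) (hT : IsStrongIso T) {h₁ h₂ : G}
    (hh : StrongEquiv S h₁ h₂) : nval S g₁ h₁ = nval S g₂ h₂ := by
  have hsub (g h : G) : {h' | (cayley S).Adj g h' ∧ wordLength S h' = wordLength S g + 1 ∧
      StrongEquiv S h' h} ⊆ (extConeSubgraph S g).verts :=
    fun h' hh' => coneSet_subset_verts ((mem_coneSet_of_adj hh'.1).2 hh'.2.1)
  refine Set.ncard_eq_of_equiv_of_subset T.toEquiv (hsub g₁ h₁) (hsub g₂ h₂) fun x =>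
    ⟨hT.map_increasing_neighbor hgen hh, fun hx => ?_⟩
  simpa using hT.symm.map_increasing_neighbor hgen hh.symm hx

end Counting

/-- The values `m(C̄(g))` and `n(C̄(g),C̄(h))` are invariant under strong equivalence
of extended cones. -/
theorem mval_nval_invariant (S : Set G) (hS : S.Finite) (hgen : Subgroup.closure S = ⊤)
    (g₁ g₂ h₁ h₂ : G) (hg : StrongEquiv S g₁ g₂) (hh : StrongEquiv S h₁ h₂) :
    mval S g₁ = mval S g₂ ∧ nval S g₁ h₁ = nval S g₂ h₂ := by
  obtain ⟨T, hT⟩ := hg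
  exact ⟨IsStrongIso.mval_eq hS hgen hT, IsStrongIso.nval_eq hgen hT hh⟩
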